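/- Let f, g be continuous functions on a compact probability space (M, μ), and let x₁,…,x_n be i.i.d. samples from μ. Let (P_n f)(j) = f(x_j)/√n. Then for sufficiently large n, with probability at least 1 − 2/n⁹, |⟨P_n f, P_n g⟩₂ − ⟨f, g⟩_{L²(μ)}| ≤ 6 √(log n / n) · ‖f‖_{L⁴(μ)} ‖g‖_{L⁴(μ)}. -/

import Mathlib

/-!
Write `Z = f g - ∫ f g`, so that the sample error is `(1/n) ∑ Z(x_j)`. The function `Z` is bounded
and centred, and by Cauchy–Schwarz `E Z² ≤ E (f g)² ≤ ‖f‖₄² ‖g‖₄² = B²`. From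
`e^u ≤ 1 + u + u²` for `|u| ≤ 1` one gets the Bernstein-type moment bound `E e^{tZ} ≤ e^{t² B²}`
for `|t| ‖Z‖_∞ ≤ 1`, and the Chernoff bound with `t = 3s/B`, `s = √(log n / n)`, bounds each tail
of `∑ Z(x_j)` at level `6 n s B` by `e^{-9 n s²} = n^{-9}`. The constraint on `t` holds as soon as
`log n / n` is small. If `B = 0`, then `Z = 0` almost everywhere and the estimate is trivial.
-/

open MeasureTheory ProbabilityTheory Real Filter Topology

section Moments

variable {M : Type*} [MeasurableSpace M] {μ : Measure M}

lemma mgf_le_exp_mul_sq_of_abs_le [IsProbabilityMeasure μ] {Z : M → ℝ} (hZ : AEMeasurable Z μ)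
    {C v t : ℝ} (hC : ∀ᵐ y ∂μ, |Z y| ≤ C) (hmean : ∫ y, Z y ∂μ = 0) (hv : ∫ y, Z y ^ 2 ∂μ ≤ v)
    (ht : |t| * C ≤ 1) :
    mgf Z μ t ≤ exp (t ^ 2 * v) := by
  have hZi : Integrable Z μ := .of_bound hZ.aestronglyMeasurable C (by simpa using hC)
  have hZ2i : Integrable (fun y => Z y ^ 2) μ :=
    .of_bound (hZ.pow_const 2).aestronglyMeasurable (C ^ 2) <| by
      filter_upwards [hC] with y hy
      simpa [abs_pow] using pow_le_pow_left₀ (abs_nonneg _) hy 2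
  have hexp_le : ∀ᵐ y ∂μ, exp (t * Z y) ≤ 1 + t * Z y + t ^ 2 * Z y ^ 2 := by
    filter_upwards [hC] with y hy
    have htZ : |t * Z y| ≤ 1 := by
      rw [abs_mul]; exact (mul_le_mul_of_nonneg_left hy (abs_nonneg t)).trans ht
    have := (abs_le.1 (abs_exp_sub_one_sub_id_le htZ)).2
    linarith [mul_pow t (Z y) 2]
  have hrhs : Integrable (fun y => 1 + t * Z y + t ^ 2 * Z y ^ 2) μ :=
    ((integrable_const 1).add (hZi.const_mul t)).add (hZ2i.const_mul _)
  calc mgf Z μ t ≤ ∫ y, (1 + t * Z y + t ^ 2 * Z y ^ 2) ∂μ :=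
        integral_mono_of_nonneg (ae_of_all _ fun _ => (exp_pos _).le) hrhs hexp_le
    _ = 1 + t ^ 2 * ∫ y, Z y ^ 2 ∂μ := by
        rw [integral_add (f := fun y => 1 + t * Z y) ((integrable_const 1).add (hZi.const_mul t))
            (hZ2i.const_mul _),
          integral_add (integrable_const 1) (hZi.const_mul t), integral_const_mul,
          integral_const_mul, hmean]
        simp
    _ ≤ 1 + t ^ 2 * v := by gcongr
    _ ≤ exp (t ^ 2 * v) := by linarith [add_one_le_exp (t ^ 2 * v)]

lemma integral_sq_mul_sq_le {f g : M → ℝ} (hf : AEStronglyMeasurable f μ)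
    (hg : AEStronglyMeasurable g μ) (hf4 : Integrable (fun y => f y ^ 4) μ)
    (hg4 : Integrable (fun y => g y ^ 4) μ) :
    ∫ y, (f y * g y) ^ 2 ∂μ ≤
      ((∫ y, f y ^ 4 ∂μ) ^ (1 / 4 : ℝ) * (∫ y, g y ^ 4 ∂μ) ^ (1 / 4 : ℝ)) ^ 2 := by
  have memLp_sq : ∀ {φ : M → ℝ}, AEStronglyMeasurable φ μ → Integrable (fun y => φ y ^ 4) μ →
      MemLp (fun y => φ y ^ 2) (ENNReal.ofReal 2) μ := fun {φ} hφ hφ4 => by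
    rw [ENNReal.ofReal_ofNat, memLp_two_iff_integrable_sq (f := fun y => φ y ^ 2) (hφ.pow 2)]
    simpa only [← pow_mul] using hφ4
  have holder := integral_mul_le_Lp_mul_Lq_of_nonneg Real.HolderConjugate.two_two
    (ae_of_all _ fun y => sq_nonneg (f y)) (ae_of_all _ fun y => sq_nonneg (g y))
    (memLp_sq hf hf4) (memLp_sq hg hg4)
  have hfourth : ∀ φ : M → ℝ, ∫ y, (φ y ^ 2) ^ (2 : ℝ) ∂μ = ∫ y, φ y ^ 4 ∂μ := fun φ => by
    simp_rw [rpow_two, ← pow_mul]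
  rw [hfourth, hfourth] at holder
  have hroot : ∀ a : ℝ, 0 ≤ a → (a ^ (1 / 4 : ℝ)) ^ 2 = a ^ (1 / 2 : ℝ) := fun a ha => by
    rw [← rpow_natCast, ← rpow_mul ha]; norm_num
  rw [mul_pow, hroot _ (integral_nonneg fun _ => by positivity),
    hroot _ (integral_nonneg fun _ => by positivity)]
  simpa only [mul_pow] using holder

end Moments

lemma tendsto_sqrt_log_div_self_atTop : Tendsto (fun n : ℕ => √(log n / n)) atTop (𝓝 0) := by
  have h := (tendsto_pow_log_div_mul_add_atTop 1 0 1 one_ne_zero).comp tendsto_natCast_atTop_atTop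
  simpa using h.sqrt

lemma natCast_mul_sqrt_log_div_sq {n : ℕ} (hn : 1 ≤ n) : n * √(log n / n) ^ 2 = log n := by
  have hn' : (0 : ℝ) < n := by exact_mod_cast hn
  rw [sq_sqrt (div_nonneg (log_natCast_nonneg n) hn'.le)]
  field_simp

lemma exp_neg_nine_mul_log {n : ℕ} (hn : 1 ≤ n) : exp (-(9 * log n)) = 1 / (n : ℝ) ^ 9 := by
  have hn' : (0 : ℝ) < n := by exact_mod_cast hn
  rw [← show log ((n : ℝ) ^ 9) = 9 * log n by norm_num [log_pow], exp_neg, exp_log (by positivity),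
    one_div]

section Samples

variable {Ω M : Type*} [MeasurableSpace Ω] [MeasurableSpace M] {P : Measure Ω} {μ : Measure M}
  {x : ℕ → Ω → M}

lemma ae_sum_comp_eq_zero (hxm : ∀ j, Measurable (x j)) (hdist : ∀ j, P.map (x j) = μ)
    {Z : M → ℝ} (hZ : Z =ᵐ[μ] 0) (n : ℕ) : ∀ᵐ ω ∂P, ∑ j ∈ Finset.range n, Z (x j ω) = 0 := by
  have hsample : ∀ᵐ ω ∂P, ∀ j, Z (x j ω) = 0 := ae_all_iff.2 fun j =>
    ae_of_ae_map (p := fun y => Z y = 0) (hxm j).aemeasurable (hdist j ▸ hZ)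
  filter_upwards [hsample] with ω hω using Finset.sum_eq_zero fun j _ => hω j

variable [IsProbabilityMeasure P] [IsProbabilityMeasure μ]

lemma ofReal_one_sub_le_of_measureReal_compl_le {s : Set Ω} {δ : ℝ} (h : P.real sᶜ ≤ δ) :
    ENNReal.ofReal (1 - δ) ≤ P s := by
  calc ENNReal.ofReal (1 - δ) ≤ ENNReal.ofReal (1 - P.real sᶜ) := by gcongr
    _ = 1 - P sᶜ := by rw [ENNReal.ofReal_sub _ measureReal_nonneg, ofReal_measureReal,
        ENNReal.ofReal_one]
    _ ≤ P s := tsub_le_iff_right.2 (measure_univ (μ := P) ▸ measure_univ_le_add_compl s)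

lemma measureReal_le_sum_comp_le (hxm : ∀ j, Measurable (x j)) (hindep : iIndepFun x P)
    (hdist : ∀ j, P.map (x j) = μ) {Z : M → ℝ} (hZ : Measurable Z) {C v t : ℝ}
    (hC : ∀ y, |Z y| ≤ C) (hmean : ∫ y, Z y ∂μ = 0) (hv : ∫ y, Z y ^ 2 ∂μ ≤ v)
    (ht : 0 ≤ t) (htC : t * C ≤ 1) (n : ℕ) (ε : ℝ) :
    P.real {ω | ε ≤ ∑ j ∈ Finset.range n, Z (x j ω)} ≤ exp (-t * ε + n * (t ^ 2 * v)) := by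
  have hexp_int : Integrable (fun y => exp (t * Z y)) μ :=
    .of_bound (by fun_prop) (exp (t * C)) (ae_of_all _ fun y => by
      rw [norm_of_nonneg (exp_pos _).le, exp_le_exp]
      exact mul_le_mul_of_nonneg_left (abs_le.1 (hC y)).2 ht)
  have hmgf : ∀ j, mgf (Z ∘ x j) P t = mgf Z μ t := fun j => by
    rw [← mgf_map (hxm j).aemeasurable (hdist j ▸ hexp_int.aestronglyMeasurable), hdist j]
  have hindep' : iIndepFun (fun j => Z ∘ x j) P := hindep.comp (fun _ => Z) (fun _ => hZ)
  have hint : Integrable (fun ω => exp (t * (∑ j ∈ Finset.range n, Z ∘ x j) ω)) P :=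
    hindep'.integrable_exp_mul_sum (fun j => hZ.comp (hxm j)) fun j _ => by
      rw [← hdist j] at hexp_int
      exact hexp_int.comp_measurable (hxm j)
  calc P.real {ω | ε ≤ ∑ j ∈ Finset.range n, Z (x j ω)}
      = P.real {ω | ε ≤ (∑ j ∈ Finset.range n, Z ∘ x j) ω} := by
        simp only [Finset.sum_apply, Function.comp_apply]
    _ ≤ exp (-t * ε) * mgf (∑ j ∈ Finset.range n, Z ∘ x j) P t :=
        measure_ge_le_exp_mul_mgf ε ht hint
    _ = exp (-t * ε) * mgf Z μ t ^ n := by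
        rw [hindep'.mgf_sum (fun j => hZ.comp (hxm j)), Finset.prod_congr rfl fun j _ => hmgf j,
          Finset.prod_const, Finset.card_range]
    _ ≤ exp (-t * ε) * exp (t ^ 2 * v) ^ n := by
        gcongr
        · exact mgf_nonneg
        · exact mgf_le_exp_mul_sq_of_abs_le hZ.aemeasurable (ae_of_all _ hC) hmean hv
            (by rwa [abs_of_nonneg ht])
    _ = exp (-t * ε + n * (t ^ 2 * v)) := by rw [← exp_nat_mul, exp_add]

lemma measureReal_le_abs_sum_comp_le (hxm : ∀ j, Measurable (x j)) (hindep : iIndepFun x P)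
    (hdist : ∀ j, P.map (x j) = μ) {Z : M → ℝ} (hZ : Measurable Z) {C v r : ℝ}
    (hC : ∀ y, |Z y| ≤ C) (hmean : ∫ y, Z y ∂μ = 0) (hv : ∫ y, Z y ^ 2 ∂μ ≤ v) (hv0 : 0 < v)
    (hr : 0 ≤ r) (hrC : r * C ≤ 2 * v) (n : ℕ) :
    P.real {ω | n * r ≤ |∑ j ∈ Finset.range n, Z (x j ω)|} ≤ 2 * exp (-(n * r ^ 2 / (4 * v))) := by
  -- `t = r / (2 v)` minimises the Chernoff exponent `-t n r + n t² v`.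
  have ht : 0 ≤ r / (2 * v) := by positivity
  have htC : r / (2 * v) * C ≤ 1 := by
    rwa [div_mul_eq_mul_div, div_le_one (by positivity)]
  have hexponent :
      -(r / (2 * v)) * (n * r) + n * ((r / (2 * v)) ^ 2 * v) = -(n * r ^ 2 / (4 * v)) := by
    field_simp; ring
  have hupper := measureReal_le_sum_comp_le hxm hindep hdist hZ hC hmean hv ht htC n (n * r)
  have hlower := measureReal_le_sum_comp_le hxm hindep hdist (Z := fun y => -Z y) hZ.neg
    (C := C) (fun y => by simpa using hC y)
    (by rw [integral_neg, hmean, neg_zero]) (by simpa using hv) ht htC n (n * r)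
  rw [hexponent] at hupper hlower
  calc P.real {ω | n * r ≤ |∑ j ∈ Finset.range n, Z (x j ω)|}
      ≤ P.real ({ω | n * r ≤ ∑ j ∈ Finset.range n, Z (x j ω)} ∪
          {ω | n * r ≤ ∑ j ∈ Finset.range n, -Z (x j ω)}) := by
        refine measureReal_mono fun ω hω => ?_
        rcases le_abs'.1 (Set.mem_ofPred_eq ▸ hω) with h | h
        · right
          simp only [Set.mem_ofPred_eq, Finset.sum_neg_distrib]
          linarith
        · exact Or.inl h
    _ ≤ _ := (measureReal_union_le _ _).trans (by linarith)

lemma eventually_measureReal_compl_abs_sum_comp_le (hxm : ∀ j, Measurable (x j))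
    (hindep : iIndepFun x P) (hdist : ∀ j, P.map (x j) = μ) {Z : M → ℝ} (hZ : Measurable Z)
    {C B : ℝ} (hC : ∀ y, |Z y| ≤ C) (hmean : ∫ y, Z y ∂μ = 0) (hB : 0 ≤ B)
    (hv : ∫ y, Z y ^ 2 ∂μ ≤ B ^ 2) :
    ∀ᶠ n : ℕ in atTop,
      P.real {ω | |∑ j ∈ Finset.range n, Z (x j ω)| ≤ n * (6 * √(log n / n) * B)}ᶜ ≤
        2 / (n : ℝ) ^ 9 := by
  rcases hB.eq_or_lt with rfl | hBpos
  · have hZ2 : Integrable (fun y => Z y ^ 2) μ :=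
      .of_bound (by fun_prop) (C ^ 2) (ae_of_all _ fun y => by
        simpa [abs_pow] using pow_le_pow_left₀ (abs_nonneg _) (hC y) 2)
    have hZ0 : Z =ᵐ[μ] 0 := by
      filter_upwards [(integral_eq_zero_iff_of_nonneg (fun y => sq_nonneg (Z y)) hZ2).1
        (le_antisymm (by simpa using hv) (integral_nonneg fun y => sq_nonneg _))] with y hy
      exact pow_eq_zero_iff two_ne_zero |>.1 hy
    refine .of_forall fun n => ?_
    rw [mul_zero, mul_zero, Set.compl_ofPred, (measureReal_eq_zero_iff (measure_ne_top _ _)).2 <|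
      ae_iff.1 <| by filter_upwards [ae_sum_comp_eq_zero hxm hdist hZ0 n] with ω hω; simp [hω]]
    positivity
  have hsmall : Tendsto (fun n : ℕ => √(log n / n) * (3 * C)) atTop (𝓝 0) := by
    simpa using tendsto_sqrt_log_div_self_atTop.mul_const (3 * C)
  filter_upwards [eventually_ge_atTop 1, hsmall.eventually (gt_mem_nhds hBpos)] with n hn hsC
  set s := √(log n / n)
  calc P.real {ω | |∑ j ∈ Finset.range n, Z (x j ω)| ≤ n * (6 * s * B)}ᶜ
      ≤ P.real {ω | n * (6 * s * B) ≤ |∑ j ∈ Finset.range n, Z (x j ω)|} :=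
        measureReal_mono <| Set.compl_ofPred _ ▸ Set.ofPred_subset_ofPred.2 fun ω hω =>
          (not_le.1 hω).le
    _ ≤ 2 * exp (-(n * (6 * s * B) ^ 2 / (4 * B ^ 2))) :=
        measureReal_le_abs_sum_comp_le hxm hindep hdist hZ hC hmean hv (by positivity)
          (by positivity) (by nlinarith) n
    _ = 2 / (n : ℝ) ^ 9 := by
        rw [show n * (6 * s * B) ^ 2 / (4 * B ^ 2) = 9 * (n * s ^ 2) by field_simp; ring,
          natCast_mul_sqrt_log_div_sq hn, exp_neg_nine_mul_log hn]
        ring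

end Samples

lemma abs_one_div_mul_sum_sub_le_iff {n : ℕ} (hn : n ≠ 0) (a : ℕ → ℝ) (m r : ℝ) :
    |1 / (n : ℝ) * ∑ j ∈ Finset.range n, a j - m| ≤ r ↔
      |∑ j ∈ Finset.range n, (a j - m)| ≤ n * r := by
  have hn' : (0 : ℝ) < n := by positivity
  have hcenter : 1 / (n : ℝ) * ∑ j ∈ Finset.range n, a j - m =
      (∑ j ∈ Finset.range n, (a j - m)) / n := by
    rw [Finset.sum_sub_distrib, Finset.sum_const, Finset.card_range, nsmul_eq_mul]
    field_simp
  rw [hcenter, abs_div, abs_of_pos hn', div_le_iff₀ hn', mul_comm r]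

theorem stmt_9 {Ω M : Type*} [MeasurableSpace Ω]
    [TopologicalSpace M] [CompactSpace M] [MeasurableSpace M] [BorelSpace M]
    (P : Measure Ω) [IsProbabilityMeasure P]
    (μ : Measure M) [IsProbabilityMeasure μ]
    (x : ℕ → Ω → M) (hxm : ∀ j, Measurable (x j))
    (hindep : iIndepFun x P)
    (hdist : ∀ j, P.map (x j) = μ)
    (f g : M → ℝ) (hf : Continuous f) (hg : Continuous g) :
    ∃ N : ℕ, ∀ n : ℕ, N ≤ n →
      ENNReal.ofReal (1 - 2 / (n : ℝ) ^ 9) ≤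
        P {ω | |(1 / (n : ℝ)) * ∑ j ∈ Finset.range n, f (x j ω) * g (x j ω) -
            ∫ y, f y * g y ∂μ| ≤
          6 * Real.sqrt (Real.log n / n) *
            ((∫ y, (f y) ^ 4 ∂μ) ^ ((1 : ℝ) / 4) *
              (∫ y, (g y) ^ 4 ∂μ) ^ ((1 : ℝ) / 4))} := by
  have hint : ∀ φ : M → ℝ, Continuous φ → Integrable φ μ := fun φ hφ =>
    hφ.integrable_of_hasCompactSupport (.of_compactSpace φ)
  set Z : M → ℝ := fun y => f y * g y - ∫ y, f y * g y ∂μ with hZ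
  have hZc : Continuous Z := by fun_prop
  obtain ⟨C, hC⟩ := isCompact_univ.exists_bound_of_continuousOn hZc.continuousOn
  have hmean : ∫ y, Z y ∂μ = 0 := by
    simp only [hZ]
    rw [integral_sub (f := fun y => f y * g y) (hint _ (hf.mul hg)) (integrable_const _),
      integral_const]
    simp
  have hv : ∫ y, Z y ^ 2 ∂μ ≤
      ((∫ y, f y ^ 4 ∂μ) ^ (1 / 4 : ℝ) * (∫ y, g y ^ 4 ∂μ) ^ (1 / 4 : ℝ)) ^ 2 :=
    calc ∫ y, Z y ^ 2 ∂μ = Var[fun y => f y * g y; μ] :=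
          (variance_eq_integral (hf.mul hg).aemeasurable).symm
      _ ≤ ∫ y, (f y * g y) ^ 2 ∂μ := variance_le_expectation_sq (hf.mul hg).aestronglyMeasurable
      _ ≤ _ := integral_sq_mul_sq_le hf.aestronglyMeasurable hg.aestronglyMeasurable
          (hint _ (by fun_prop)) (hint _ (by fun_prop))
  obtain ⟨N, hN⟩ := eventually_atTop.1 <| (eventually_ge_atTop 1).and <|
    eventually_measureReal_compl_abs_sum_comp_le hxm hindep hdist hZc.measurable
      (fun y => by simpa using hC y (Set.mem_univ y)) hmean (by positivity) hv
  refine ⟨N, fun n hn => ofReal_one_sub_le_of_measureReal_compl_le ?_⟩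
  obtain ⟨hn1, hbound⟩ := hN n hn
  convert hbound using 3
  ext ω
  exact abs_one_div_mul_sum_sub_le_iff (by omega) _ _ _
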